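/- Discrete contraction theorem: let μ_k > 0, let f_k : ℝ^n → ℝ^n be C¹ with Jacobians Df_k, and suppose there is c̄ > 0 such that m(Df_k(ξ), μ_k) ≤ -c̄² for all ξ ∈ ℝ^n and all k, where m is the matrix measure induced by a norm |·|. Then for the iterations x_{k+1} = x_k + μ_k f_k(x_k) and y_{k+1} = y_k + μ_k f_k(y_k), one has |x_N - y_N| ≤ |x_0 - y_0| ∏_{k=0}^{N-1} (1 + μ_k·(-c̄²)) for all N (in particular 1 - μ_k c̄² ≥ 0). -/

import Mathlib

/-!
Since `‖I + μ A‖ = 1 + μ m(A, μ)`, the bound on the matrix measure says that the Jacobian of the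
Euler step `z ↦ z + μ_k f_k(z)` has norm at most `1 - μ_k c̄²` everywhere (so this number is
nonnegative), and by the mean value inequality the step is Lipschitz with that constant.
Composing the `N` steps multiplies the constants.
-/

/-- Matrix measure on time scales: `m(A,μ) = (‖I + μA‖ - 1)/μ` for an induced operator norm. -/
noncomputable def matrixMeasure {𝕜 E : Type*} [RCLike 𝕜] [NormedAddCommGroup E]
    [NormedSpace 𝕜 E] (A : E →L[𝕜] E) (μ : ℝ) : ℝ :=
  (‖(1 : E →L[𝕜] E) + (μ : 𝕜) • A‖ - 1) / μ

open Finset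

section MatrixMeasure

variable {𝕜 E : Type*} [RCLike 𝕜] [NormedAddCommGroup E] [NormedSpace 𝕜 E]

theorem norm_one_add_smul_eq_one_add_mul_matrixMeasure {μ : ℝ} (hμ : μ ≠ 0) (A : E →L[𝕜] E) :
    ‖(1 : E →L[𝕜] E) + (μ : 𝕜) • A‖ = 1 + μ * matrixMeasure A μ := by
  rw [matrixMeasure, mul_div_cancel₀ _ hμ]
  ring

theorem norm_one_add_smul_le_of_matrixMeasure_le {μ c : ℝ} (hμ : 0 < μ) {A : E →L[𝕜] E}
    (hA : matrixMeasure A μ ≤ c) : ‖(1 : E →L[𝕜] E) + (μ : 𝕜) • A‖ ≤ 1 + μ * c := by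
  rw [norm_one_add_smul_eq_one_add_mul_matrixMeasure hμ.ne']
  gcongr

end MatrixMeasure

section EulerStep

variable {E : Type*} [NormedAddCommGroup E] [NormedSpace ℝ E]

theorem norm_add_smul_sub_add_smul_le_of_matrixMeasure_le {μ c : ℝ} (hμ : 0 < μ) {g : E → E}
    (hg : Differentiable ℝ g) (hm : ∀ ξ, matrixMeasure (fderiv ℝ g ξ) μ ≤ c) (a b : E) :
    ‖(a + μ • g a) - (b + μ • g b)‖ ≤ (1 + μ * c) * ‖a - b‖ := by
  have hderiv : ∀ ξ, HasFDerivAt (fun z ↦ z + μ • g z)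
      ((1 : E →L[ℝ] E) + μ • fderiv ℝ g ξ) ξ := fun ξ ↦
    (hasFDerivAt_id ξ).add ((hg ξ).hasFDerivAt.const_smul μ)
  have hbound : ∀ ξ, ‖(1 : E →L[ℝ] E) + μ • fderiv ℝ g ξ‖ ≤ 1 + μ * c := fun ξ ↦ by
    simpa only [RCLike.ofReal_real_eq_id, id_eq] using
      norm_one_add_smul_le_of_matrixMeasure_le hμ (hm ξ)
  exact convex_univ.norm_image_sub_le_of_norm_hasFDerivWithin_le
    (fun ξ _ ↦ (hderiv ξ).hasFDerivWithinAt) (fun ξ _ ↦ hbound ξ) (Set.mem_univ b) (Set.mem_univ a)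

end EulerStep

theorem le_mul_prod_range_of_succ_le_mul {d K : ℕ → ℝ} (hK : ∀ k, 0 ≤ K k)
    (hd : ∀ k, d (k + 1) ≤ K k * d k) (N : ℕ) : d N ≤ d 0 * ∏ k ∈ range N, K k := by
  induction N with
  | zero => simp
  | succ N ih =>
    calc d (N + 1) ≤ K N * d N := hd N
      _ ≤ K N * (d 0 * ∏ k ∈ range N, K k) := mul_le_mul_of_nonneg_left ih (hK N)
      _ = d 0 * ∏ k ∈ range (N + 1), K k := by rw [prod_range_succ]; ring

theorem discrete_contraction_general {E : Type*} [NormedAddCommGroup E] [NormedSpace ℝ E]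
    (μ : ℕ → ℝ) (hμ : ∀ k, 0 < μ k) (f : ℕ → E → E) (hf : ∀ k, ContDiff ℝ 1 (f k))
    (cbar : ℝ)
    (hm : ∀ (k : ℕ) (ξ : E), matrixMeasure (fderiv ℝ (f k) ξ) (μ k) ≤ -cbar ^ 2)
    (x y : ℕ → E) (hx : ∀ k, x (k + 1) = x k + μ k • f k (x k))
    (hy : ∀ k, y (k + 1) = y k + μ k • f k (y k)) :
    (∀ k, 0 ≤ 1 - μ k * cbar ^ 2) ∧
    ∀ N : ℕ, ‖x N - y N‖ ≤
      ‖x 0 - y 0‖ * ∏ k ∈ Finset.range N, (1 + μ k * (-cbar ^ 2)) := by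
  have hK : ∀ k, 0 ≤ 1 + μ k * (-cbar ^ 2) := fun k ↦
    (norm_nonneg _).trans (norm_one_add_smul_le_of_matrixMeasure_le (𝕜 := ℝ) (hμ k) (hm k 0))
  refine ⟨fun k ↦ by simpa only [mul_neg, ← sub_eq_add_neg] using hK k, ?_⟩
  refine le_mul_prod_range_of_succ_le_mul hK fun k ↦ ?_
  rw [hx, hy]
  exact norm_add_smul_sub_add_smul_le_of_matrixMeasure_le (hμ k)
    ((hf k).differentiable one_ne_zero) (hm k) (x k) (y k)

/-- Discrete contraction theorem: if `m(Df_k(ξ), μ_k) ≤ -c̄²` for all `ξ` and `k`, then any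
two solutions of `x_{k+1} = x_k + μ_k f_k(x_k)` satisfy
`|x_N - y_N| ≤ |x_0 - y_0| ∏_{k<N}(1 + μ_k·(-c̄²))`, and in particular `1 - μ_k c̄² ≥ 0`. -/
theorem discrete_contraction {E : Type*} [NormedAddCommGroup E] [NormedSpace ℝ E]
    (μ : ℕ → ℝ) (hμ : ∀ k, 0 < μ k) (f : ℕ → E → E) (hf : ∀ k, ContDiff ℝ 1 (f k))
    (cbar : ℝ) (hc : 0 < cbar)
    (hm : ∀ (k : ℕ) (ξ : E), matrixMeasure (fderiv ℝ (f k) ξ) (μ k) ≤ -cbar ^ 2)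
    (x y : ℕ → E) (hx : ∀ k, x (k + 1) = x k + μ k • f k (x k))
    (hy : ∀ k, y (k + 1) = y k + μ k • f k (y k)) :
    (∀ k, 0 ≤ 1 - μ k * cbar ^ 2) ∧
    ∀ N : ℕ, ‖x N - y N‖ ≤
      ‖x 0 - y 0‖ * ∏ k ∈ Finset.range N, (1 + μ k * (-cbar ^ 2)) :=
  discrete_contraction_general μ hμ f hf cbar hm x y hx hy
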